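/- Let f : X → (-∞,+∞] be a c-antiderivative of a multivalued mapping M : X ⇉ Y, and let S be a nonempty subset of dom(M). Then the upper envelope γ_{[c,f|_S,M]}(x) := sup{ h(x) : h ∈ 𝒜_{[c,f|_S,M]} } itself belongs to 𝒜_{[c,f|_S,M]}; that is, γ_{[c,f|_S,M]} is c-convex, is a c-antiderivative of M, and coincides with f on S. -/

import Mathlib

noncomputable section

open scoped Classical

variable {X Y : Type*}

/-- The `c`-transform of `f : X → EReal`, a function on `Y`:
`f^c(y) = sup_{x ∈ X} (c(x,y) - f(x))`. The `c`-transform of a function on `Y` is obtained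
by applying this to the swapped coupling `fun y x => c x y`. -/
def cTransform (c : X → Y → ℝ) (f : X → EReal) : Y → EReal :=
  fun y => ⨆ x, ((c x y : EReal) - f x)

/-- `f` is proper: it takes no value `-∞` (i.e. maps into `(-∞, +∞]`) and is finite somewhere. -/
def ProperFn (f : X → EReal) : Prop :=
  (∀ x, f x ≠ ⊥) ∧ ∃ x, f x ≠ ⊤

/-- `f` is `c`-convex: it is proper and is the `c`-transform of some proper
`g : Y → (-∞, +∞]`. -/
def IsCConvex (c : X → Y → ℝ) (f : X → EReal) : Prop :=
  ProperFn f ∧ ∃ g : Y → EReal, ProperFn g ∧ f = cTransform (fun y x => c x y) g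

/-- The `c`-subdifferential of `f`:
`∂_c f(x) = { y | ∀ x', f(x) + c(x',y) ≤ f(x') + c(x,y) }`. -/
def cSubdiff (c : X → Y → ℝ) (f : X → EReal) (x : X) : Set Y :=
  { y | ∀ x', f x + (c x' y : EReal) ≤ f x' + (c x y : EReal) }

/-- The domain of a multivalued mapping `M : X ⇉ Y`. -/
def mapDom (M : X → Set Y) : Set X := { x | (M x).Nonempty }

/-- The inverse multivalued mapping `M⁻¹ : Y ⇉ X`. -/
def mapInv (M : X → Set Y) : Y → Set X := fun y => { x | y ∈ M x }

/-- The image `M(S) = ⋃_{s ∈ S} M(s)` of a set `S` under a multivalued mapping. -/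
def mapImageOn (M : X → Set Y) (S : Set X) : Set Y := { y | ∃ s ∈ S, y ∈ M s }

/-- The image `Im(M) = ⋃_{x ∈ X} M(x)` of a multivalued mapping. -/
def mapIm (M : X → Set Y) : Set Y := { y | ∃ x, y ∈ M x }

/-- `f` is a `c`-antiderivative of `M`: `f` is proper and `G(M) ⊆ G(∂_c f)`. -/
def IsCAntiderivative (c : X → Y → ℝ) (f : X → EReal) (M : X → Set Y) : Prop :=
  ProperFn f ∧ ∀ x y, y ∈ M x → y ∈ cSubdiff c f x

/-- The family `𝒜_{[c, f|_S, M]}` of all `c`-convex `c`-antiderivatives of `M`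
which coincide with `f` on `S`. -/
def cFamily (c : X → Y → ℝ) (f : X → EReal) (S : Set X) (M : X → Set Y) :
    Set (X → EReal) :=
  { h | IsCConvex c h ∧ (∀ x y, y ∈ M x → y ∈ cSubdiff c h x) ∧ ∀ s ∈ S, h s = f s }

/-- The upper envelope `γ_{[c, f|_S, M]}`. -/
def upperEnv (c : X → Y → ℝ) (f : X → EReal) (S : Set X) (M : X → Set Y) : X → EReal :=
  fun x => ⨆ h ∈ cFamily c f S M, h x

/-- The lower envelope `α_{[c, f|_S, M]}`. -/
def lowerEnv (c : X → Y → ℝ) (f : X → EReal) (S : Set X) (M : X → Set Y) : X → EReal :=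
  fun x => ⨅ h ∈ cFamily c f S M, h x

/-- The indicator function `ι_A` (0 on `A`, `+∞` off `A`). -/
def indicatorE (A : Set X) : X → EReal := fun x => if x ∈ A then 0 else ⊤

/-- Rockafellar's function `R_{[c,M,s]}`: the supremum over `n ≥ 1` and chains
`x_1 = s`, `x_{n+1} = x`, `{(x_i, y_i)}_{i=1}^n ⊆ G(M)` of
`Σ_{i=1}^n [c(x_{i+1}, y_i) - c(x_i, y_i)]` (0-indexed below). -/
def rockafellar (c : X → Y → ℝ) (M : X → Set Y) (s : X) : X → EReal := fun x =>
  ⨆ (n : ℕ) (_ : 0 < n) (xs : ℕ → X) (ys : ℕ → Y)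
      (_ : xs 0 = s ∧ ∀ i < n, ys i ∈ M (xs i)),
    (((∑ i ∈ Finset.range n,
        (c (if i + 1 < n then xs (i + 1) else x) (ys i) - c (xs i) (ys i))) : ℝ) : EReal)

/-- `M` is cyclically monotone of order `n` with respect to `c`: for any `n` pairs
`{(x_i, y_i)}_{i=1}^n ⊆ G(M)`, setting `x_{n+1} = x_1`,
`0 ≤ Σ_{i=1}^n [c(x_i,y_i) - c(x_{i+1},y_i)]` (0-indexed below, cyclically). -/
def IsNCMonotone (c : X → Y → ℝ) (M : X → Set Y) (n : ℕ) : Prop :=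
  ∀ (xs : ℕ → X) (ys : ℕ → Y), (∀ i < n, ys i ∈ M (xs i)) →
    0 ≤ ∑ i ∈ Finset.range n, (c (xs i) (ys i) - c (xs ((i + 1) % n)) (ys i))

/-- `M` is `c`-cyclically monotone: `n`-`c`-monotone for all `n`. -/
def IsCCyclicallyMonotone (c : X → Y → ℝ) (M : X → Set Y) : Prop :=
  ∀ n : ℕ, IsNCMonotone c M n

/-!
A `c`-convex `h` equals its double transform `h^{cc}`, and `h ≤ h'` gives `h^{cc} ≤ h'^{cc}`;
so the supremum `γ` of `c`-convex functions satisfies `γ ≤ γ^{cc} ≤ γ`. The inequalities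
`h(x) + c(x',y) ≤ h(x') + c(x,y)` defining `y ∈ ∂_c h(x)` pass to the supremum. The family is
nonempty: at a point `x` with `y ∈ ∂_c f(x)` the Fenchel–Young equality
`f^c(y) = c(x,y) - f(x)` gives `f^{cc}(x) = f(x)` and `y ∈ ∂_c f^{cc}(x)`, so `f^{cc}` lies in
the family. Hence `γ = f` on `S`, and `γ` is finite at a point of `S` with a `c`-subgradient,
which is what makes `γ` and `γ^c` proper.
-/

theorem EReal.coe_sub_le_comm {r : ℝ} {a b : EReal} (h : (r : EReal) - a ≤ b) :
    (r : EReal) - b ≤ a := by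
  induction a <;> induction b
  all_goals first
    | (norm_cast at h ⊢; linarith)
    | simp_all [EReal.sub_top, ← EReal.coe_sub]

theorem EReal.add_coe_le_iff_le_sub {a b : EReal} {r : ℝ} : a + r ≤ b ↔ a ≤ b - r :=
  (EReal.le_sub_iff_add_le (.inl (EReal.coe_ne_bot r)) (.inl (EReal.coe_ne_top r))).symm

section CTransform

variable {c : X → Y → ℝ} {f : X → EReal} {x : X} {y : Y} {v : ℝ}

theorem cTransform_cTransform_le (c : X → Y → ℝ) (f : X → EReal) (x : X) :
    cTransform (fun y x => c x y) (cTransform c f) x ≤ f x :=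
  iSup_le fun y => EReal.coe_sub_le_comm (le_iSup (fun x => (c x y : EReal) - f x) x)

theorem cTransform_anti (c : X → Y → ℝ) {f g : X → EReal} (h : f ≤ g) :
    cTransform c g ≤ cTransform c f :=
  fun _ => iSup_mono fun x => EReal.sub_le_sub le_rfl (h x)

theorem ProperFn.ne_top_of_mem_cSubdiff (hf : ProperFn f) (hy : y ∈ cSubdiff c f x) :
    f x ≠ ⊤ := by
  obtain ⟨hbot, x₀, htop⟩ := hf
  intro hx
  have h := hy x₀
  lift f x₀ to ℝ using ⟨htop, hbot x₀⟩ with w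
  rw [hx, EReal.top_add_coe, top_le_iff, ← EReal.coe_add] at h
  exact EReal.coe_ne_top _ h

theorem cTransform_eq_of_mem_cSubdiff (hv : f x = v) (hy : y ∈ cSubdiff c f x) :
    cTransform c f y = ((c x y - v : ℝ) : EReal) := by
  refine le_antisymm (iSup_le fun x' => ?_) (le_iSup_of_le x (by rw [hv]; norm_cast))
  have h := hy x'
  rw [hv] at h
  generalize f x' = b at h ⊢
  induction b with
  | bot => exact absurd h (by simp [← EReal.coe_add])
  | coe b => norm_cast at h ⊢; linarith
  | top => simp [EReal.sub_top]

theorem le_cTransform_cTransform_of_mem_cSubdiff (hv : f x = v) (hy : y ∈ cSubdiff c f x)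
    (x' : X) : ((c x' y - c x y + v : ℝ) : EReal) ≤
      cTransform (fun y x => c x y) (cTransform c f) x' :=
  le_iSup_of_le y <| by
    rw [cTransform_eq_of_mem_cSubdiff hv hy, ← EReal.coe_sub]
    exact EReal.coe_le_coe_iff.2 (by linarith)

theorem cTransform_cTransform_eq_of_mem_cSubdiff (hv : f x = v) (hy : y ∈ cSubdiff c f x) :
    cTransform (fun y x => c x y) (cTransform c f) x = f x :=
  (cTransform_cTransform_le c f x).antisymm <| by
    simpa [hv] using le_cTransform_cTransform_of_mem_cSubdiff hv hy x

theorem mem_cSubdiff_cTransform_cTransform (hv : f x = v) (hy : y ∈ cSubdiff c f x) :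
    y ∈ cSubdiff c (cTransform (fun y x => c x y) (cTransform c f)) x := fun x' =>
  calc cTransform (fun y x => c x y) (cTransform c f) x + c x' y
      = ((c x' y - c x y + v : ℝ) : EReal) + c x y := by
        rw [cTransform_cTransform_eq_of_mem_cSubdiff hv hy, hv, ← EReal.coe_add,
          ← EReal.coe_add]
        ring_nf
    _ ≤ cTransform (fun y x => c x y) (cTransform c f) x' + c x y :=
        add_le_add_left (le_cTransform_cTransform_of_mem_cSubdiff hv hy x') _

theorem isCConvex_cTransform_cTransform (hv : f x = v) (hy : y ∈ cSubdiff c f x) :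
    IsCConvex c (cTransform (fun y x => c x y) (cTransform c f)) := by
  refine ⟨⟨fun x' => ?_, x, ?_⟩, cTransform c f, ⟨fun y' => ?_, y, ?_⟩, rfl⟩
  · exact ne_bot_of_le_ne_bot (EReal.coe_ne_bot _)
      (le_cTransform_cTransform_of_mem_cSubdiff hv hy x')
  · simp [cTransform_cTransform_eq_of_mem_cSubdiff hv hy, hv]
  · refine ne_bot_of_le_ne_bot ?_ (le_iSup (fun x => (c x y' : EReal) - f x) x)
    simp [hv, ← EReal.coe_sub]
  · rw [cTransform_eq_of_mem_cSubdiff hv hy]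
    exact EReal.coe_ne_top _

theorem IsCConvex.cTransform_cTransform_eq (hf : IsCConvex c f) :
    cTransform (fun y x => c x y) (cTransform c f) = f := by
  obtain ⟨-, g, -, rfl⟩ := hf
  exact le_antisymm (cTransform_cTransform_le c _)
    (cTransform_anti _ (cTransform_cTransform_le (fun y x => c x y) g))

end CTransform

section Envelope

variable {c : X → Y → ℝ} {F : Set (X → EReal)}

theorem cTransform_cTransform_biSup_of_isCConvex (hF : ∀ h ∈ F, IsCConvex c h) :
    cTransform (fun y x => c x y) (cTransform c fun x => ⨆ h ∈ F, h x) =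
      fun x => ⨆ h ∈ F, h x := by
  funext x
  refine le_antisymm (cTransform_cTransform_le c _ x) (iSup₂_le fun h hh => ?_)
  have hle : h ≤ fun x => ⨆ h ∈ F, h x := fun x' => le_iSup₂ (f := fun h _ => h x') h hh
  calc h x = cTransform (fun y x => c x y) (cTransform c h) x := by
        rw [(hF h hh).cTransform_cTransform_eq]
    _ ≤ cTransform (fun y x => c x y) (cTransform c fun x => ⨆ h ∈ F, h x) x :=
        cTransform_anti _ (cTransform_anti c hle) x

theorem mem_cSubdiff_biSup {x : X} {y : Y} (hF : ∀ h ∈ F, y ∈ cSubdiff c h x) :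
    y ∈ cSubdiff c (fun x => ⨆ h ∈ F, h x) x := fun x' =>
  EReal.add_coe_le_iff_le_sub.2 <| iSup₂_le fun h hh =>
    EReal.add_coe_le_iff_le_sub.1 <| (hF h hh x').trans <|
      add_le_add_left (le_iSup₂ (f := fun h _ => h x') h hh) _

end Envelope

section Family

variable {c : X → Y → ℝ} {f : X → EReal} {S : Set X} {M : X → Set Y}

theorem IsCAntiderivative.coe_toReal_eq {x : X} {y : Y} (hf : IsCAntiderivative c f M)
    (hy : y ∈ M x) : ((f x).toReal : EReal) = f x :=
  EReal.coe_toReal (hf.1.ne_top_of_mem_cSubdiff (hf.2 x y hy)) (hf.1.1 x)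

theorem cTransform_cTransform_mem_cFamily (hf : IsCAntiderivative c f M) (hS : S ⊆ mapDom M)
    (hM : (mapDom M).Nonempty) :
    cTransform (fun y x => c x y) (cTransform c f) ∈ cFamily c f S M := by
  obtain ⟨x, y, hy⟩ := hM
  refine ⟨isCConvex_cTransform_cTransform (hf.coe_toReal_eq hy).symm (hf.2 x y hy),
    fun x y hy => ?_, fun s hs => ?_⟩
  · exact mem_cSubdiff_cTransform_cTransform (hf.coe_toReal_eq hy).symm (hf.2 x y hy)
  · obtain ⟨y, hy⟩ := hS hs
    exact cTransform_cTransform_eq_of_mem_cSubdiff (hf.coe_toReal_eq hy).symm (hf.2 s y hy)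

theorem upperEnv_eq_of_mem_cFamily {h₀ : X → EReal} (h₀_mem : h₀ ∈ cFamily c f S M) {s : X}
    (hs : s ∈ S) : upperEnv c f S M s = f s :=
  le_antisymm (iSup₂_le fun _ hh => (hh.2.2 s hs).le)
    ((h₀_mem.2.2 s hs).symm.le.trans (le_iSup₂ (f := fun h _ => h s) h₀ h₀_mem))

end Family

theorem statement1_general (c : X → Y → ℝ) (f : X → EReal)
    (M : X → Set Y) (hf : IsCAntiderivative c f M)
    (S : Set X) (hS : S.Nonempty) (hSdom : S ⊆ mapDom M) :
    upperEnv c f S M ∈ cFamily c f S M := by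
  obtain ⟨s, hs⟩ := hS
  obtain ⟨y, hy⟩ := hSdom hs
  have h₀ := cTransform_cTransform_mem_cFamily hf hSdom ⟨s, y, hy⟩
  have hγS : ∀ s ∈ S, upperEnv c f S M s = f s := fun _ => upperEnv_eq_of_mem_cFamily h₀
  have hγM : ∀ x y, y ∈ M x → y ∈ cSubdiff c (upperEnv c f S M) x :=
    fun x y hy => mem_cSubdiff_biSup fun _ hh => hh.2.1 x y hy
  have hγ : cTransform (fun y x => c x y) (cTransform c (upperEnv c f S M)) = upperEnv c f S M :=
    cTransform_cTransform_biSup_of_isCConvex fun _ hh => hh.1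
  refine ⟨?_, hγM, hγS⟩
  rw [← hγ]
  exact isCConvex_cTransform_cTransform (by rw [hγS s hs, hf.coe_toReal_eq hy]) (hγM s y hy)

/-- The upper envelope `γ_{[c, f|_S, M]}` belongs to `𝒜_{[c, f|_S, M]}`. -/
theorem statement1 [Nonempty X] [Nonempty Y] (c : X → Y → ℝ) (f : X → EReal)
    (M : X → Set Y) (hf : IsCAntiderivative c f M)
    (S : Set X) (hS : S.Nonempty) (hSdom : S ⊆ mapDom M) :
    upperEnv c f S M ∈ cFamily c f S M :=
  statement1_general c f M hf S hS hSdom
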